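/- Any connected NP_2-digital H-space is NP_2-contractible. -/

import Mathlib

/-- A digital image: a finite set with a reflexive, symmetric adjacency relation
(a finite reflexive graph). -/
structure DigImage where
  carrier : Type
  [fintype : Fintype carrier]
  adj : carrier → carrier → Prop
  adj_refl : ∀ x, adj x x
  adj_symm : ∀ {x y}, adj x y → adj y x

attribute [instance] DigImage.fintype

/-- `f : (X,κ) → (Y,λ)` is digitally continuous if it preserves adjacency. -/
def DigContinuous (X Y : DigImage) (f : X.carrier → Y.carrier) : Prop :=
  ∀ ⦃a b : X.carrier⦄, X.adj a b → Y.adj (f a) (f b)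

/-- The product of two digital images with the normal product adjacency `NP_i`
(for `i ≤ 1` this is `NP_1`; otherwise `NP_2`): two pairs are adjacent iff
their coordinates are adjacent in at most `i` positions and equal elsewhere. -/
def DigImage.prod (i : ℕ) (X Y : DigImage) : DigImage where
  carrier := X.carrier × Y.carrier
  adj p q :=
    if i ≤ 1 then (p.1 = q.1 ∧ Y.adj p.2 q.2) ∨ (p.2 = q.2 ∧ X.adj p.1 q.1)
    else X.adj p.1 q.1 ∧ Y.adj p.2 q.2
  adj_refl p := by
    split_ifs
    · exact Or.inl ⟨rfl, Y.adj_refl p.2⟩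
    · exact ⟨X.adj_refl p.1, Y.adj_refl p.2⟩
  adj_symm {p q} h := by
    split_ifs at h ⊢ with hi
    · rcases h with ⟨h1, h2⟩ | ⟨h1, h2⟩
      · exact Or.inl ⟨h1.symm, Y.adj_symm h2⟩
      · exact Or.inr ⟨h1.symm, X.adj_symm h2⟩
    · exact ⟨X.adj_symm h.1, Y.adj_symm h.2⟩

/-- The triple product of digital images with the normal product adjacency `NP_i`:
coordinates adjacent in at most `i` positions and equal in all other positions. -/
def DigImage.prod3 (i : ℕ) (X Y Z : DigImage) : DigImage where
  carrier := X.carrier × Y.carrier × Z.carrier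
  adj p q :=
    if i ≤ 1 then
      (p.1 = q.1 ∧ p.2.1 = q.2.1 ∧ Z.adj p.2.2 q.2.2) ∨
      (p.1 = q.1 ∧ p.2.2 = q.2.2 ∧ Y.adj p.2.1 q.2.1) ∨
      (p.2.1 = q.2.1 ∧ p.2.2 = q.2.2 ∧ X.adj p.1 q.1)
    else
      (p.1 = q.1 ∧ Y.adj p.2.1 q.2.1 ∧ Z.adj p.2.2 q.2.2) ∨
      (p.2.1 = q.2.1 ∧ X.adj p.1 q.1 ∧ Z.adj p.2.2 q.2.2) ∨
      (p.2.2 = q.2.2 ∧ X.adj p.1 q.1 ∧ Y.adj p.2.1 q.2.1)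
  adj_refl p := by
    split_ifs
    · exact Or.inl ⟨rfl, rfl, Z.adj_refl p.2.2⟩
    · exact Or.inl ⟨rfl, Y.adj_refl p.2.1, Z.adj_refl p.2.2⟩
  adj_symm {p q} h := by
    split_ifs at h ⊢ with hi
    · rcases h with ⟨h1, h2, h3⟩ | ⟨h1, h2, h3⟩ | ⟨h1, h2, h3⟩
      · exact Or.inl ⟨h1.symm, h2.symm, Z.adj_symm h3⟩
      · exact Or.inr (Or.inl ⟨h1.symm, h2.symm, Y.adj_symm h3⟩)
      · exact Or.inr (Or.inr ⟨h1.symm, h2.symm, X.adj_symm h3⟩)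
    · rcases h with ⟨h1, h2, h3⟩ | ⟨h1, h2, h3⟩ | ⟨h1, h2, h3⟩
      · exact Or.inl ⟨h1.symm, Y.adj_symm h2, Z.adj_symm h3⟩
      · exact Or.inr (Or.inl ⟨h1.symm, X.adj_symm h2, Z.adj_symm h3⟩)
      · exact Or.inr (Or.inr ⟨h1.symm, X.adj_symm h2, Y.adj_symm h3⟩)

/-- The digital interval `[0,m]_ℤ` with the standard adjacency `|a−b| ≤ 1`. -/
def digInterval (m : ℕ) : DigImage where
  carrier := Fin (m + 1)
  adj a b := |(a : ℤ) - (b : ℤ)| ≤ 1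
  adj_refl a := by simp
  adj_symm {a b} h := by
    have h' : |(a : ℤ) - (b : ℤ)| ≤ 1 := h
    rw [abs_sub_comm] at h'
    exact h'

/-- `f` and `g` are `NP_i`-digitally homotopic: there is an
`NP_i`-continuous `H : X × [0,m]_ℤ → Y` with `H(·,0) = f` and `H(·,m) = g`. -/
def DigHomotopic (i : ℕ) (X Y : DigImage) (f g : X.carrier → Y.carrier) : Prop :=
  ∃ (m : ℕ) (H : X.carrier × Fin (m + 1) → Y.carrier),
    DigContinuous (DigImage.prod i X (digInterval m)) Y H ∧
    (∀ x, H (x, 0) = f x) ∧ (∀ x, H (x, Fin.last m) = g x)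

/-- An `NP_i`-digital H-space `(X,e,μ)`. -/
structure IsHSpace (i : ℕ) (X : DigImage) (e : X.carrier)
    (μ : X.carrier × X.carrier → X.carrier) : Prop where
  continuous : DigContinuous (DigImage.prod i X X) X μ
  right_unit : DigHomotopic i X X (fun x => μ (x, e)) id
  left_unit : DigHomotopic i X X (fun x => μ (e, x)) id

/-- H-equivalence of `NP_i`-digital H-spaces. -/
def HSpaceEquiv (i : ℕ) (X : DigImage) (eX : X.carrier)
    (μX : X.carrier × X.carrier → X.carrier)
    (Y : DigImage) (eY : Y.carrier)
    (μY : Y.carrier × Y.carrier → Y.carrier) : Prop :=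
  ∃ (f : X.carrier → Y.carrier) (g : Y.carrier → X.carrier),
    DigContinuous X Y f ∧ DigContinuous Y X g ∧ f eX = eY ∧ g eY = eX ∧
    DigHomotopic i Y Y (f ∘ g) id ∧ DigHomotopic i X X (g ∘ f) id ∧
    DigHomotopic i (DigImage.prod i X X) Y (fun p => f (μX p)) (fun p => μY (f p.1, f p.2)) ∧
    DigHomotopic i (DigImage.prod i Y Y) X (fun p => g (μY p)) (fun p => μX (g p.1, g p.2))

/-- `NP_i`-homotopy equivalence of digital images. -/
def DigHtpyEquiv (i : ℕ) (X Y : DigImage) : Prop :=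
  ∃ (f : X.carrier → Y.carrier) (g : Y.carrier → X.carrier),
    DigContinuous X Y f ∧ DigContinuous Y X g ∧
    DigHomotopic i X X (g ∘ f) id ∧ DigHomotopic i Y Y (f ∘ g) id

/-- A digital image is `NP_i`-irreducible if it is not `NP_i`-homotopy
equivalent to any digital image with fewer points. -/
def DigIrreducible (i : ℕ) (X : DigImage) : Prop :=
  ¬ ∃ Y : DigImage, Fintype.card Y.carrier < Fintype.card X.carrier ∧ DigHtpyEquiv i X Y

/-- A digital image is connected if any two points are joined by a path
of consecutively adjacent points. -/
def DigConnected (X : DigImage) : Prop :=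
  ∀ a b : X.carrier, Relation.ReflTransGen X.adj a b

/-- A digital image is `NP_i`-contractible if the identity is `NP_i`-homotopic
to a constant map. -/
def DigContractible (i : ℕ) (X : DigImage) : Prop :=
  ∃ c : X.carrier, DigHomotopic i X X id (fun _ => c)

/-- An isomorphism of digital images: a continuous bijection with continuous inverse. -/
def IsDigIso (X Y : DigImage) (f : X.carrier → Y.carrier) : Prop :=
  DigContinuous X Y f ∧ ∃ g : Y.carrier → X.carrier,
    DigContinuous Y X g ∧ Function.LeftInverse g f ∧ Function.RightInverse g f

/-- The sub-digital-image on the points satisfying `P`, with the induced adjacency. -/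
noncomputable def subImage (X : DigImage) (P : X.carrier → Prop) : DigImage where
  carrier := {x : X.carrier // P x}
  fintype := Fintype.ofFinite _
  adj a b := X.adj a.1 b.1
  adj_refl a := X.adj_refl a.1
  adj_symm h := X.adj_symm h

/-- The connected component of `e`, as a digital image. -/
noncomputable def componentImage (X : DigImage) (e : X.carrier) : DigImage :=
  subImage X (fun x => Relation.ReflTransGen X.adj e x)

/-- Homotopy-associativity of an `NP_i`-digital multiplication:
`μ∘(id × μ) ≃ᵢ μ∘(μ × id)` as maps `X × X × X → X` with `NP_i` adjacency. -/
def HomotopyAssociative (i : ℕ) (X : DigImage)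
    (μ : X.carrier × X.carrier → X.carrier) : Prop :=
  DigHomotopic i (DigImage.prod3 i X X X) X
    (fun p => μ (p.1, μ (p.2.1, p.2.2)))
    (fun p => μ (μ (p.1, p.2.1), p.2.2))

/-- `α` is a left homotopy-inverse for the H-space `(X,e,μ)`. -/
def LeftHtpyInverse (i : ℕ) (X : DigImage) (e : X.carrier)
    (μ : X.carrier × X.carrier → X.carrier) (α : X.carrier → X.carrier) : Prop :=
  DigContinuous X X α ∧ DigContinuous X X (fun x => μ (α x, x)) ∧
  DigHomotopic i X X (fun x => μ (α x, x)) (fun _ => e)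

/-- `β` is a right homotopy-inverse for the H-space `(X,e,μ)`. -/
def RightHtpyInverse (i : ℕ) (X : DigImage) (e : X.carrier)
    (μ : X.carrier × X.carrier → X.carrier) (β : X.carrier → X.carrier) : Prop :=
  DigContinuous X X β ∧ DigContinuous X X (fun x => μ (x, β x)) ∧
  DigHomotopic i X X (fun x => μ (x, β x)) (fun _ => e)

/-! Removing a point `x₀` whose neighbourhood is contained in that of another point `x₁` is an
`NP_2`-deformation retraction, and H-space structures, connectedness and contractibility all
pass along it; so by induction on the number of points we may assume that no point is dominated
in this way. In such a stiff image the only map `NP_2`-homotopic to the identity is the identity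
itself, hence `μ (x, e) = x = μ (e, x)`. Continuity of `μ` then makes every neighbour `y` of `e`
dominate `e` (as `z ∼ e` gives `z = μ (z, e) ∼ μ (e, y) = y`), so `y = e`, and connectedness
leaves `X = {e}`. -/

section StrongHomotopy

variable {W X Y Z : DigImage}

@[simp]
theorem DigImage.prod_two_adj {p q : X.carrier × Y.carrier} :
    (DigImage.prod 2 X Y).adj p q ↔ X.adj p.1 q.1 ∧ Y.adj p.2 q.2 :=
  Iff.rfl

theorem DigContinuous.comp {g : Y.carrier → Z.carrier} {f : X.carrier → Y.carrier}
    (hg : DigContinuous Y Z g) (hf : DigContinuous X Y f) : DigContinuous X Z (g ∘ f) :=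
  fun _ _ h => hg (hf h)

theorem DigContinuous.map₂ {μ : X.carrier × Y.carrier → Z.carrier}
    (hμ : DigContinuous (DigImage.prod 2 X Y) Z μ) {x x' : X.carrier} {y y' : Y.carrier}
    (hx : X.adj x x') (hy : Y.adj y y') : Z.adj (μ (x, y)) (μ (x', y')) :=
  hμ (DigImage.prod_two_adj.2 ⟨hx, hy⟩)

/-- One step of an `NP_2`-homotopy. -/
def DigStrongClose (X Y : DigImage) (f g : X.carrier → Y.carrier) : Prop :=
  DigContinuous X Y f ∧ DigContinuous X Y g ∧ ∀ ⦃a b⦄, X.adj a b → Y.adj (f a) (g b)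

namespace DigStrongClose

variable {f f' g g' : X.carrier → Y.carrier}

theorem refl (hf : DigContinuous X Y f) : DigStrongClose X Y f f :=
  ⟨hf, hf, hf⟩

theorem symm (h : DigStrongClose X Y f g) : DigStrongClose X Y g f :=
  ⟨h.2.1, h.1, fun _ _ hab => Y.adj_symm (h.2.2 (X.adj_symm hab))⟩

theorem comp (h : DigStrongClose X Y f g) {p : W.carrier → X.carrier} {q : Y.carrier → Z.carrier}
    (hp : DigContinuous W X p) (hq : DigContinuous Y Z q) :
    DigStrongClose W Z (q ∘ f ∘ p) (q ∘ g ∘ p) :=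
  ⟨hq.comp (h.1.comp hp), hq.comp (h.2.1.comp hp), fun _ _ hab => hq (h.2.2 (hp hab))⟩

theorem map₂ {μ : X.carrier × Y.carrier → Z.carrier}
    (hμ : DigContinuous (DigImage.prod 2 X Y) Z μ) {f f' : W.carrier → X.carrier}
    {g g' : W.carrier → Y.carrier} (hf : DigStrongClose W X f f') (hg : DigStrongClose W Y g g') :
    DigStrongClose W Z (fun w => μ (f w, g w)) (fun w => μ (f' w, g' w)) :=
  ⟨fun _ _ h => hμ.map₂ (hf.1 h) (hg.1 h), fun _ _ h => hμ.map₂ (hf.2.1 h) (hg.2.1 h),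
    fun _ _ h => hμ.map₂ (hf.2.2 h) (hg.2.2 h)⟩

theorem const {u v : Y.carrier} (h : Y.adj u v) : DigStrongClose X Y (fun _ => u) (fun _ => v) :=
  ⟨fun _ _ _ => Y.adj_refl u, fun _ _ _ => Y.adj_refl v, fun _ _ _ => h⟩

end DigStrongClose

abbrev DigStrongHomotopic (X Y : DigImage) :
    (X.carrier → Y.carrier) → (X.carrier → Y.carrier) → Prop :=
  Relation.ReflTransGen (DigStrongClose X Y)

namespace DigStrongHomotopic

variable {f g : X.carrier → Y.carrier}

theorem symm (h : DigStrongHomotopic X Y f g) : DigStrongHomotopic X Y g f := by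
  induction h with
  | refl => rfl
  | tail _ hs ih => exact ih.head hs.symm

theorem comp (h : DigStrongHomotopic X Y f g) {p : W.carrier → X.carrier}
    {q : Y.carrier → Z.carrier} (hp : DigContinuous W X p) (hq : DigContinuous Y Z q) :
    DigStrongHomotopic W Z (q ∘ f ∘ p) (q ∘ g ∘ p) :=
  h.lift (fun f => q ∘ f ∘ p) fun _ _ hs => hs.comp hp hq

theorem map₂ {μ : X.carrier × Y.carrier → Z.carrier}
    (hμ : DigContinuous (DigImage.prod 2 X Y) Z μ) {f f' : W.carrier → X.carrier}
    {g g' : W.carrier → Y.carrier} (hf : DigStrongHomotopic W X f f')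
    (hg : DigStrongHomotopic W Y g g') (hf' : DigContinuous W X f') (hg₀ : DigContinuous W Y g) :
    DigStrongHomotopic W Z (fun w => μ (f w, g w)) (fun w => μ (f' w, g' w)) :=
  (hf.lift (fun (f : W.carrier → X.carrier) w => μ (f w, g w))
      fun _ _ hs => hs.map₂ hμ (.refl hg₀)).trans
    (hg.lift (fun (g : W.carrier → Y.carrier) w => μ (f' w, g w))
      fun _ _ hs => (DigStrongClose.refl hf').map₂ hμ hs)

theorem const {u v : Y.carrier} (h : Relation.ReflTransGen Y.adj u v) :
    DigStrongHomotopic X Y (fun _ => u) (fun _ => v) :=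
  h.lift (fun y _ => y) fun _ _ => DigStrongClose.const

theorem reflTransGen_adj (h : DigStrongHomotopic X Y f g) (x : X.carrier) :
    Relation.ReflTransGen Y.adj (f x) (g x) :=
  h.lift (fun f => f x) fun _ _ hs => hs.2.2 (X.adj_refl x)

theorem continuous_right (h : DigStrongHomotopic X Y f g) (hf : DigContinuous X Y f) :
    DigContinuous X Y g := by
  induction h with
  | refl => exact hf
  | tail _ hs => exact hs.2.1

/-- The end of the sequence is repeated, so that every term has a successor. -/
theorem exists_seq (h : DigStrongHomotopic X Y f g) (hg : DigContinuous X Y g) :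
    ∃ (m : ℕ) (G : ℕ → X.carrier → Y.carrier),
      G 0 = f ∧ G m = g ∧ ∀ t, DigStrongClose X Y (G t) (G (t + 1)) := by
  induction h using Relation.ReflTransGen.head_induction_on with
  | refl => exact ⟨0, fun _ => g, rfl, rfl, fun _ => .refl hg⟩
  | @head f₀ _ hs _ ih =>
    obtain ⟨m, G, rfl, hGm, hG⟩ := ih
    refine ⟨m + 1, fun t => Nat.casesOn t f₀ G, rfl, hGm, ?_⟩
    rintro (_ | t)
    · exact hs
    · exact hG t

end DigStrongHomotopic

theorem digStrongClose_of_seq {G : ℕ → X.carrier → Y.carrier}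
    (hG : ∀ t, DigStrongClose X Y (G t) (G (t + 1))) {s t : ℕ} (hst : |(s : ℤ) - t| ≤ 1) :
    DigStrongClose X Y (G s) (G t) := by
  obtain rfl | rfl | rfl : t = s ∨ t = s + 1 ∨ s = t + 1 := by
    rw [abs_le] at hst
    omega
  · exact .refl (hG t).1
  · exact hG s
  · exact (hG t).symm

theorem digStrongClose_slice {m : ℕ} {H : X.carrier × Fin (m + 1) → Y.carrier}
    (hH : DigContinuous (DigImage.prod 2 X (digInterval m)) Y H) {s t : Fin (m + 1)}
    (hst : (digInterval m).adj s t) :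
    DigStrongClose X Y (fun x => H (x, s)) (fun x => H (x, t)) :=
  ⟨fun _ _ h => hH.map₂ h ((digInterval m).adj_refl s),
    fun _ _ h => hH.map₂ h ((digInterval m).adj_refl t), fun _ _ h => hH.map₂ h hst⟩

theorem digHomotopic_two_iff {f g : X.carrier → Y.carrier} (hf : DigContinuous X Y f) :
    DigHomotopic 2 X Y f g ↔ DigStrongHomotopic X Y f g := by
  constructor
  · rintro ⟨m, H, hH, hH0, hHm⟩
    have hslices : ∀ t, DigStrongHomotopic X Y f (fun x => H (x, t)) := by
      intro t
      induction t using Fin.induction with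
      | zero => simp only [hH0]; rfl
      | succ t ih =>
        refine ih.tail (digStrongClose_slice hH ?_)
        show |((t : ℕ) : ℤ) - ((t : ℕ) + 1 : ℕ)| ≤ 1
        simp
    simpa only [hHm] using hslices (Fin.last m)
  · intro h
    obtain ⟨m, G, hG0, hGm, hG⟩ := h.exists_seq (h.continuous_right hf)
    refine ⟨m, fun p => G p.2 p.1, fun p q hpq => (digStrongClose_of_seq hG hpq.2).2.2 hpq.1,
      fun x => by simp [hG0], fun x => by simp [hGm]⟩

end StrongHomotopy

section Retract

variable {A X : DigImage} {i : A.carrier → X.carrier} {r : X.carrier → A.carrier}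

theorem DigConnected.of_surjective {Y : DigImage} {f : X.carrier → Y.carrier}
    (hX : DigConnected X) (hf : DigContinuous X Y f) (hsurj : Function.Surjective f) :
    DigConnected Y := by
  intro a b
  obtain ⟨x, rfl⟩ := hsurj a
  obtain ⟨y, rfl⟩ := hsurj b
  exact (hX x y).lift f hf

theorem DigContractible.of_retract (hA : DigContractible 2 A) (hi : DigContinuous A X i)
    (hr : DigContinuous X A r) (hir : DigStrongHomotopic X X id (i ∘ r)) :
    DigContractible 2 X := by
  obtain ⟨c, hc⟩ := hA
  have hc' := ((digHomotopic_two_iff fun _ _ h => h).1 hc).comp hr hi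
  exact ⟨i c, (digHomotopic_two_iff fun _ _ h => h).2 (hir.trans hc')⟩

theorem IsHSpace.retract {e : X.carrier} {μ : X.carrier × X.carrier → X.carrier}
    (h : IsHSpace 2 X e μ) (hi : DigContinuous A X i) (hr : DigContinuous X A r)
    (hri : Function.LeftInverse r i) (hir : DigStrongHomotopic X X id (i ∘ r)) :
    IsHSpace 2 A (r e) (fun p => r (μ (i p.1, i p.2))) := by
  have hμ := h.continuous
  have hconst : DigStrongHomotopic A X (fun _ => i (r e)) (fun _ => e) :=
    .const (hir.symm.reflTransGen_adj e)
  have hconst_cont : DigContinuous A X (fun _ => i (r e)) := fun _ _ _ => X.adj_refl _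
  have hri_id : r ∘ id ∘ i = id := funext hri
  refine ⟨fun p q hpq => hr (hμ.map₂ (hi hpq.1) (hi hpq.2)), ?_, ?_⟩
  · have hunit := (digHomotopic_two_iff fun _ _ h => hμ.map₂ h (X.adj_refl e)).1 h.right_unit
    show DigHomotopic 2 A A (fun a => r (μ (i a, i (r e)))) id
    refine (digHomotopic_two_iff fun _ _ h => hr (hμ.map₂ (hi h) (X.adj_refl _))).2 ?_
    refine ((DigStrongHomotopic.map₂ hμ .refl hconst hi hconst_cont).comp
      (fun _ _ h => h) hr).trans ?_
    have hunit' := hunit.comp hi hr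
    rwa [hri_id] at hunit'
  · have hunit := (digHomotopic_two_iff fun _ _ h => hμ.map₂ (X.adj_refl e) h).1 h.left_unit
    show DigHomotopic 2 A A (fun a => r (μ (i (r e), i a))) id
    refine (digHomotopic_two_iff fun _ _ h => hr (hμ.map₂ (X.adj_refl _) (hi h))).2 ?_
    refine ((hconst.map₂ hμ .refl (fun _ _ _ => X.adj_refl e) hi).comp
      (fun _ _ h => h) hr).trans ?_
    have hunit' := hunit.comp hi hr
    rwa [hri_id] at hunit'

end Retract

section CollapsePoint

def collapsePoint (X : DigImage) [DecidableEq X.carrier] {x₀ x₁ : X.carrier} (hne : x₀ ≠ x₁) :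
    X.carrier → (subImage X (· ≠ x₀)).carrier :=
  fun x => ⟨if x = x₀ then x₁ else x, by split_ifs with hx; exacts [hne.symm, hx]⟩

variable {X : DigImage} {x₀ x₁ : X.carrier}

theorem card_subImage_ne_lt (x₀ : X.carrier) :
    Fintype.card (subImage X (· ≠ x₀)).carrier < Fintype.card X.carrier :=
  @Fintype.card_subtype_lt _ _ (· ≠ x₀) (subImage X (· ≠ x₀)).fintype x₀ (by simp)

variable [DecidableEq X.carrier]

theorem collapsePoint_leftInverse (hne : x₀ ≠ x₁) :
    Function.LeftInverse (collapsePoint X hne) Subtype.val :=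
  fun a => Subtype.ext (if_neg a.2)

theorem adj_collapsePoint (hne : x₀ ≠ x₁) (hdom : ∀ z, X.adj z x₀ → X.adj z x₁)
    {x y : X.carrier} (hxy : X.adj x y) : X.adj y (collapsePoint X hne x).1 := by
  show X.adj y (if x = x₀ then x₁ else x)
  split_ifs with hx
  · exact hdom y (hx ▸ X.adj_symm hxy)
  · exact X.adj_symm hxy

theorem continuous_collapsePoint (hne : x₀ ≠ x₁) (hdom : ∀ z, X.adj z x₀ → X.adj z x₁) :
    DigContinuous X (subImage X (· ≠ x₀)) (collapsePoint X hne) :=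
  fun _ _ hxy => adj_collapsePoint hne hdom (adj_collapsePoint hne hdom hxy)

theorem digStrongClose_id_collapsePoint (hne : x₀ ≠ x₁) (hdom : ∀ z, X.adj z x₀ → X.adj z x₁) :
    DigStrongClose X X id (Subtype.val ∘ collapsePoint X hne) :=
  ⟨fun _ _ h => h, fun _ _ h => continuous_collapsePoint hne hdom h,
    fun _ _ h => adj_collapsePoint hne hdom (X.adj_symm h)⟩

end CollapsePoint

section Stiff

variable {X : DigImage}

/-- No point is dominated by another. -/
def DigImage.IsStiff (X : DigImage) : Prop :=
  ∀ x y : X.carrier, (∀ z, X.adj z x → X.adj z y) → x = y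

theorem DigImage.IsStiff.eq_id_of_strongHomotopic (hX : X.IsStiff) {f : X.carrier → X.carrier}
    (h : DigStrongHomotopic X X f id) : f = id := by
  induction h using Relation.ReflTransGen.head_induction_on with
  | refl => rfl
  | head hs _ ih =>
    subst ih
    funext x
    exact (hX x _ fun z hz => X.adj_symm (hs.2.2 (X.adj_symm hz))).symm

theorem IsHSpace.eq_of_adj_of_isStiff {e : X.carrier} {μ : X.carrier × X.carrier → X.carrier}
    (h : IsHSpace 2 X e μ) (hX : X.IsStiff) {y : X.carrier} (hy : X.adj e y) : y = e := by
  have hμ := h.continuous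
  have hright : (fun x => μ (x, e)) = id := hX.eq_id_of_strongHomotopic <|
    (digHomotopic_two_iff fun _ _ h => hμ.map₂ h (X.adj_refl e)).1 h.right_unit
  have hleft : (fun x => μ (e, x)) = id := hX.eq_id_of_strongHomotopic <|
    (digHomotopic_two_iff fun _ _ h => hμ.map₂ (X.adj_refl e) h).1 h.left_unit
  refine (hX e y fun z hz => ?_).symm
  simpa only [congrFun hright z, congrFun hleft y, id_eq] using hμ.map₂ hz hy

theorem IsHSpace.eq_unit_of_isStiff {e : X.carrier} {μ : X.carrier × X.carrier → X.carrier}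
    (h : IsHSpace 2 X e μ) (hX : X.IsStiff) (hconn : DigConnected X) (x : X.carrier) : x = e := by
  induction hconn e x with
  | refl => rfl
  | tail _ hyz ih => exact h.eq_of_adj_of_isStiff hX (ih ▸ hyz)

end Stiff

theorem digContractible_of_forall_eq {X : DigImage} {e : X.carrier} (h : ∀ x, x = e) :
    DigContractible 2 X := by
  refine ⟨e, ?_⟩
  rw [show (id : X.carrier → X.carrier) = fun _ => e from funext h]
  exact (digHomotopic_two_iff fun _ _ _ => X.adj_refl e).2 .refl

/-- Any connected `NP_2`-digital H-space is `NP_2`-contractible. -/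
theorem np2_connected_hspace_contractible (X : DigImage) (e : X.carrier)
    (μ : X.carrier × X.carrier → X.carrier) (h : IsHSpace 2 X e μ)
    (hconn : DigConnected X) :
    DigContractible 2 X := by
  classical
  induction hn : Fintype.card X.carrier using Nat.strong_induction_on generalizing X e μ with
  | _ n ih =>
  by_cases hX : X.IsStiff
  · exact digContractible_of_forall_eq (h.eq_unit_of_isStiff hX hconn)
  obtain ⟨x₀, x₁, hdom, hne⟩ : ∃ x₀ x₁ : X.carrier, (∀ z, X.adj z x₀ → X.adj z x₁) ∧ x₀ ≠ x₁ := by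
    simpa [DigImage.IsStiff] using hX
  have hi : DigContinuous (subImage X (· ≠ x₀)) X Subtype.val := fun _ _ h => h
  have hr := continuous_collapsePoint hne hdom
  have hri := collapsePoint_leftInverse hne
  have hir : DigStrongHomotopic X X id (Subtype.val ∘ collapsePoint X hne) :=
    .single (digStrongClose_id_collapsePoint hne hdom)
  refine DigContractible.of_retract ?_ hi hr hir
  exact ih _ (hn ▸ card_subImage_ne_lt x₀) _ _ _ (h.retract hi hr hri hir)
    (hconn.of_surjective hr hri.surjective) rfl
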